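/- For every k > 1, the refinement cost of the layered bisplitter satisfies IRC(C_k) ≥ 2^k · IRC(B_k), where B_k is the bisplitter. -/

import Mathlib

/-! ## Labeled transition systems with initial partition, partitions, refinement -/

structure LTS (S A : Type) where
  tr : S → A → S → Prop
  init : Finset (Finset S)

def inSameBlock {S : Type} (π : Finset (Finset S)) (s t : S) : Prop :=
  ∃ B ∈ π, s ∈ B ∧ t ∈ B

def IsBlockPartition {S : Type} (π : Finset (Finset S)) : Prop :=
  ∅ ∉ π ∧ (∀ B ∈ π, ∀ B' ∈ π, B ≠ B' → Disjoint B B') ∧ ∀ s : S, ∃ B ∈ π, s ∈ B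

def RefinesPart {S : Type} (π' π : Finset (Finset S)) : Prop :=
  ∀ B' ∈ π', ∃ B ∈ π, B' ⊆ B

def ReachesSet {S A : Type} (L : LTS S A) (s : S) (a : A) (U : Finset S) : Prop :=
  ∃ t ∈ U, L.tr s a t

def StableUnderBlock {S A : Type} (L : LTS S A) (V U : Finset S) : Prop :=
  ∀ a : A, (∀ s ∈ V, ReachesSet L s a U) ∨ (∀ s ∈ V, ¬ ReachesSet L s a U)

def IsStablePartition {S A : Type} (L : LTS S A) (π : Finset (Finset S)) : Prop :=
  ∀ B ∈ π, ∀ C ∈ π, StableUnderBlock L B C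

def SplitWitness {S A : Type} (L : LTS S A) (π : Finset (Finset S)) (s t : S) : Prop :=
  ∃ a s', L.tr s a s' ∧ ∀ t', L.tr t a t' → ¬ inSameBlock π s' t'

def ValidRefinement {S A : Type} (L : LTS S A) (π π' : Finset (Finset S)) : Prop :=
  RefinesPart π' π ∧ π' ≠ π ∧
  ∀ s t : S, ¬ inSameBlock π' s t →
    (¬ inSameBlock π s t ∨ SplitWitness L π s t ∨ SplitWitness L π t s)

def ValidRefinementSeq {S A : Type} (L : LTS S A) (n : ℕ)
    (seq : ℕ → Finset (Finset S)) : Prop :=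
  seq 0 = L.init ∧ (∀ i ≤ n, IsBlockPartition (seq i)) ∧
  (∀ i < n, ValidRefinement L (seq i) (seq (i + 1))) ∧
  IsStablePartition L (seq n)

/-! ## Refinement costs -/

def IRCstep {S : Type} [DecidableEq S] (π π' : Finset (Finset S)) : ℕ :=
  ∑ B ∈ π, (B.card - (π'.filter fun B' => B' ⊆ B).sup Finset.card)

def IRCseq {S : Type} [DecidableEq S] (n : ℕ) (seq : ℕ → Finset (Finset S)) : ℕ :=
  ∑ i ∈ Finset.range n, IRCstep (seq i) (seq (i + 1))

noncomputable def IRC {S A : Type} [DecidableEq S] (L : LTS S A) : ℕ :=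
  sInf {c | ∃ n seq, ValidRefinementSeq L n seq ∧ IRCseq n seq = c}

noncomputable def PIRC {S A : Type} (L : LTS S A) : ℕ :=
  sInf {n | ∃ seq, ValidRefinementSeq L n seq}

/-! ## Bisimulation, end structures, paths -/

def IsBisimulation {S A : Type} (L : LTS S A) (R : S → S → Prop) : Prop :=
  Symmetric R ∧ (∀ s t, R s t → inSameBlock L.init s t) ∧
  ∀ s t a s', R s t → L.tr s a s' → ∃ t', L.tr t a t' ∧ R s' t'

def Bisimilar {S A : Type} (L : LTS S A) (s t : S) : Prop :=
  ∃ R, IsBisimulation L R ∧ R s t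

def TransClosed {S A : Type} (L : LTS S A) (U : Set S) : Prop :=
  ∀ s ∈ U, ∀ a t, L.tr s a t → t ∈ U

def EndStructure {S A : Type} (L : LTS S A) (U : Set S) : Prop :=
  U.Nonempty ∧ TransClosed L U ∧
  ∀ V : Set S, TransClosed L V → (U ∩ V).Nonempty → U ⊆ V

def PathTo {S A : Type} (L : LTS S A) : List A → S → S → Prop
  | [], s, t => s = t
  | a :: w, s, t => ∃ u, L.tr s a u ∧ PathTo L w u t

/-! ## The bisplitter B_k -/

def bsStep {k : ℕ} (σ : Fin k → Bool) (j : Fin (k - 1)) : Fin k → Bool :=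
  if σ ⟨j.val + 1, by have := j.isLt; omega⟩ = false then σ
  else fun p => if p.val < j.val then σ p else if p.val = j.val then !(σ p) else false

def prefixBlock (k : ℕ) (p : List Bool) : Finset (Fin k → Bool) :=
  Finset.univ.filter fun σ => p <+: List.ofFn σ

def bisplitter (k : ℕ) : LTS (Fin k → Bool) (Fin (k - 1)) where
  tr := fun s a t => t = bsStep s a
  init := {prefixBlock k [false], prefixBlock k [true]}

def zeroState (k : ℕ) : Fin k → Bool := fun _ => false

def oneState (k : ℕ) : Fin k → Bool := fun i => decide (i.val = 0)

/-- The bisplitter with the initial partition updated by the end structure oracle. -/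
def bisplitter' (k : ℕ) : LTS (Fin k → Bool) (Fin (k - 1)) where
  tr := (bisplitter k).tr
  init := { {zeroState k}, prefixBlock k [false] \ {zeroState k},
            {oneState k}, prefixBlock k [true] \ {oneState k} }

/-! ## The layered bisplitter C_k -/

def treeHeight (k : ℕ) : ℕ := Nat.clog 2 (k / 2)

abbrev TreeWord (h : ℕ) := Σ i : Fin (h + 1), Fin i.val → Bool

abbrev CState (k : ℕ) :=
  ((Fin k → Bool) × Fin (2 ^ k)) ⊕ ((Fin k → Bool) × TreeWord (treeHeight k))

instance instCStateDecEq (k : ℕ) : DecidableEq (CState k) := inferInstance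

instance instCStateFintype (k : ℕ) : Fintype (CState k) := inferInstance

def rootWord (k : ℕ) : TreeWord (treeHeight k) := ⟨⟨0, Nat.succ_pos _⟩, Fin.elim0⟩

def binVal (w : List Bool) : ℕ := w.foldl (fun acc b => 2 * acc + b.toNat) 0

/-- The a_j-successor in B_k for j = lbl(v) = min(bin(v)+1, k-1) (1-based),
    i.e. 0-based index min(bin(v), k-2). -/
def bkSucc (k : ℕ) (σ : Fin k → Bool) (v : List Bool) : Fin k → Bool :=
  if h : min (binVal v) (k - 2) < k - 1 then bsStep σ ⟨min (binVal v) (k - 2), h⟩ else σ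

def cTr (k : ℕ) (s : CState k) (α : Bool) (t : CState k) : Prop :=
  match s with
  | Sum.inl (σ, ℓ) =>
      if h : ℓ.val + 1 < 2 ^ k then t = Sum.inl (σ, ⟨ℓ.val + 1, h⟩)
      else t = Sum.inr (σ, rootWord k)
  | Sum.inr (σ, w) =>
      if h : w.1.val < treeHeight k then
        t = Sum.inr (σ, ⟨⟨w.1.val + 1, by omega⟩, Fin.snoc w.2 α⟩)
      else t = Sum.inl (bkSucc k σ (List.ofFn w.2 ++ [α]), ⟨0, by positivity⟩)

def firstBit {k : ℕ} (σ : Fin k → Bool) : Bool :=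
  if h : 0 < k then σ ⟨0, h⟩ else false

def stakeBlock (k : ℕ) (ℓ : Fin (2 ^ k)) (b : Bool) : Finset (CState k) :=
  Finset.univ.filter fun s => ∃ σ : Fin k → Bool, firstBit σ = b ∧ s = Sum.inl (σ, ℓ)

def treeBlock (k : ℕ) : Finset (CState k) :=
  Finset.univ.filter fun s => s.isRight = true

def cInit (k : ℕ) : Finset (Finset (CState k)) :=
  (Finset.univ.image fun p : Fin (2 ^ k) × Bool => stakeBlock k p.1 p.2) ∪ {treeBlock k}

def layered (k : ℕ) : LTS (CState k) Bool := ⟨cTr k, cInit k⟩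

/-- The stake index of level 1. -/
def firstLevel (k : ℕ) : Fin (2 ^ k) := ⟨0, by positivity⟩

/-- The stake index of level 2^k. -/
def lastLevel (k : ℕ) : Fin (2 ^ k) :=
  ⟨2 ^ k - 1, Nat.sub_lt (by positivity) one_pos⟩

def mkWord {h : ℕ} (w : List Bool) (hw : w.length ≤ h) : TreeWord h :=
  ⟨⟨w.length, Nat.lt_succ_of_le hw⟩, fun j => w.get j⟩

def endSet (k : ℕ) (σ₀ : Fin k → Bool) : Set (CState k) :=
  {s | (∃ ℓ, s = Sum.inl (σ₀, ℓ)) ∨ ∃ w, s = Sum.inr (σ₀, w)}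

/-! ## End structure partition -/

noncomputable def bisimClass {S A : Type} [Fintype S] (L : LTS S A) (s : S) : Finset S :=
  (Set.toFinite {t | Bisimilar L s t}).toFinset

def ESUnion {S A : Type} (L : LTS S A) : Set S := ⋃₀ {U | EndStructure L U}

noncomputable def esPartition {S A : Type} [Fintype S] [DecidableEq S] (L : LTS S A) :
    Finset (Finset S) :=
  ((Set.toFinite {B : Finset S | ∃ s ∈ ESUnion L, B = bisimClass L s}).toFinset ∪
      L.init.image fun B =>
        B \ (Set.toFinite {t | ∃ s ∈ ESUnion L, Bisimilar L s t}).toFinset) \ {∅}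

/-! ## The sequential splitter D_n (states 0,…,n-1 standing for 1,…,n) -/

def seqSplitter (n : ℕ) : LTS (Fin n) Unit where
  tr := fun s _ t => if h : s.val + 1 < n then t = ⟨s.val + 1, h⟩ else t = s
  init := {Finset.univ.filter fun s => s.val + 1 < n,
           Finset.univ.filter fun s => s.val + 1 = n}

def dPart (n i : ℕ) : Finset (Finset (Fin n)) :=
  {Finset.univ.filter fun s => s.val + i < n} ∪
    (Finset.univ.filter fun s : Fin n => n ≤ s.val + i).image fun s => {s}

/-! ## The fast parallel example G_k -/

def gLTS (k : ℕ) : LTS (Fin (2 ^ k) ⊕ Fin k) Unit where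
  tr := fun s _ t => ∃ (i : Fin (2 ^ k)) (j : Fin k),
    s = Sum.inl i ∧ t = Sum.inr j ∧ Nat.testBit i.val j.val = true
  init := {Finset.univ.filter fun s => s.isLeft = true} ∪
    Finset.univ.image fun j : Fin k => ({Sum.inr j} : Finset (Fin (2 ^ k) ⊕ Fin k))
/-! ### Auxiliary development -/

namespace LB13

open Finset

variable {S A : Type}

section PartitionBasics

lemma block_eq {π : Finset (Finset S)} (hπ : IsBlockPartition π)
    {B C : Finset S} (hB : B ∈ π) (hC : C ∈ π) {x : S} (hxB : x ∈ B) (hxC : x ∈ C) :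
    B = C := by
  by_contra hne
  exact Finset.disjoint_left.1 (hπ.2.1 B hB C hC hne) hxB hxC

lemma inSameBlock_refl {π : Finset (Finset S)} (hπ : IsBlockPartition π) (s : S) :
    inSameBlock π s s := by
  obtain ⟨B, hB, hsB⟩ := hπ.2.2 s
  exact ⟨B, hB, hsB, hsB⟩

lemma inSameBlock_symm {π : Finset (Finset S)} {s t : S}
    (h : inSameBlock π s t) : inSameBlock π t s := by
  obtain ⟨B, hB, h1, h2⟩ := h
  exact ⟨B, hB, h2, h1⟩

lemma inSameBlock_iff_mem {π : Finset (Finset S)} (hπ : IsBlockPartition π)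
    {B : Finset S} (hB : B ∈ π) {s t : S} (hs : s ∈ B) :
    inSameBlock π s t ↔ t ∈ B := by
  constructor
  · rintro ⟨C, hC, hsC, htC⟩
    rwa [block_eq hπ hB hC hs hsC]
  · exact fun ht => ⟨B, hB, hs, ht⟩

lemma nonempty_of_mem {π : Finset (Finset S)} (hπ : IsBlockPartition π)
    {B : Finset S} (hB : B ∈ π) : B.Nonempty := by
  rcases B.eq_empty_or_nonempty with h | h
  · exact absurd (h ▸ hB) hπ.1
  · exact h

lemma refines_inSameBlock {π π' : Finset (Finset S)} (hπ : IsBlockPartition π)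
    (href : RefinesPart π' π) {s t : S}
    (h : inSameBlock π' s t) : inSameBlock π s t := by
  obtain ⟨B', hB', hs, ht⟩ := h
  obtain ⟨B, hB, hsub⟩ := href B' hB'
  exact ⟨B, hB, hsub hs, hsub ht⟩

lemma refinesPart_refl (π : Finset (Finset S)) : RefinesPart π π :=
  fun B hB => ⟨B, hB, subset_rfl⟩

lemma refinesPart_trans {π₁ π₂ π₃ : Finset (Finset S)}
    (h12 : RefinesPart π₁ π₂) (h23 : RefinesPart π₂ π₃) : RefinesPart π₁ π₃ := by
  intro B hB
  obtain ⟨C, hC, hBC⟩ := h12 B hB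
  obtain ⟨D, hD, hCD⟩ := h23 C hC
  exact ⟨D, hD, hBC.trans hCD⟩

lemma card_partition_le [Fintype S] {π : Finset (Finset S)}
    (hπ : IsBlockPartition π) : π.card ≤ Fintype.card S := by
  classical
  calc π.card ≤ (π.biUnion id).card := by
        apply Finset.card_le_card_biUnion
        · intro B hB C hC hne
          exact hπ.2.1 B (by simpa using hB) C (by simpa using hC) hne
        · intro B hB
          exact nonempty_of_mem hπ hB
    _ ≤ (Finset.univ : Finset S).card := Finset.card_le_card (Finset.subset_univ _)
    _ = Fintype.card S := rfl

lemma card_lt_of_strict_refines {π π' : Finset (Finset S)}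
    (hπ : IsBlockPartition π) (hπ' : IsBlockPartition π')
    (href : RefinesPart π' π) (hne : π' ≠ π) : π.card < π'.card := by
  classical
  -- every block of π' lies in a unique block of π
  have hsub_unique : ∀ B' ∈ π', ∀ B ∈ π, ∀ C ∈ π, B' ⊆ B → B' ⊆ C → B = C := by
    intro B' hB' B hB C hC h1 h2
    obtain ⟨x, hx⟩ := nonempty_of_mem hπ' hB'
    exact block_eq hπ hB hC (h1 hx) (h2 hx)
  have hdecomp : π' = π.biUnion (fun B => π'.filter (· ⊆ B)) := by
    ext B'
    simp only [Finset.mem_biUnion, Finset.mem_filter]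
    constructor
    · intro hB'
      obtain ⟨B, hB, hsub⟩ := href B' hB'
      exact ⟨B, hB, hB', hsub⟩
    · rintro ⟨B, _, hB', _⟩
      exact hB'
  have hdisj : ∀ B ∈ π, ∀ C ∈ π, B ≠ C →
      Disjoint (π'.filter (· ⊆ B)) (π'.filter (· ⊆ C)) := by
    intro B hB C hC hne'
    rw [Finset.disjoint_left]
    intro B' h1 h2
    rw [Finset.mem_filter] at h1 h2
    exact hne' (hsub_unique B' h1.1 B hB C hC h1.2 h2.2)
  have hcard : π'.card = ∑ B ∈ π, (π'.filter (· ⊆ B)).card := by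
    conv_lhs => rw [hdecomp]
    exact Finset.card_biUnion hdisj
  -- each block of π contains at least one block of π'
  have hone : ∀ B ∈ π, 1 ≤ (π'.filter (· ⊆ B)).card := by
    intro B hB
    obtain ⟨x, hx⟩ := nonempty_of_mem hπ hB
    obtain ⟨B', hB', hxB'⟩ := hπ'.2.2 x
    obtain ⟨C, hC, hsub⟩ := href B' hB'
    have : C = B := block_eq hπ hC hB (hsub hxB') hx
    exact Finset.card_pos.2 ⟨B', Finset.mem_filter.2 ⟨hB', this ▸ hsub⟩⟩
  -- some block of π splits
  have hexB : ∃ B ∈ π, B ∉ π' := by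
    by_contra h
    push_neg at h
    apply hne
    ext B'
    constructor
    · intro hB'
      obtain ⟨B, hB, hsub⟩ := href B' hB'
      obtain ⟨x, hx⟩ := nonempty_of_mem hπ' hB'
      have hBπ' : B ∈ π' := h B hB
      rwa [block_eq hπ' hB' hBπ' hx (hsub hx)]
    · exact fun hB' => h B' hB'
  obtain ⟨B, hB, hBnot⟩ := hexB
  have htwo : 1 < (π'.filter (· ⊆ B)).card := by
    obtain ⟨x, hx⟩ := nonempty_of_mem hπ hB
    obtain ⟨B', hB', hxB'⟩ := hπ'.2.2 x
    obtain ⟨C, hC, hsub⟩ := href B' hB'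
    have hCB : C = B := block_eq hπ hC hB (hsub hxB') hx
    have hsubB : B' ⊆ B := hCB ▸ hsub
    have hne' : B' ≠ B := fun h => hBnot (h ▸ hB')
    have hssub : B' ⊂ B := ssubset_of_subset_of_ne hsubB hne'
    obtain ⟨y, hyB, hyB'⟩ := Finset.exists_of_ssubset hssub
    obtain ⟨B'', hB'', hyB''⟩ := hπ'.2.2 y
    obtain ⟨C', hC', hsub'⟩ := href B'' hB''
    have hC'B : C' = B := block_eq hπ hC' hB (hsub' hyB'') hyB
    rw [Finset.one_lt_card]
    refine ⟨B', Finset.mem_filter.2 ⟨hB', hsubB⟩, B'',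
      Finset.mem_filter.2 ⟨hB'', hC'B ▸ hsub'⟩, ?_⟩
    intro h
    exact hyB' (h ▸ hyB'')
  have : ∑ B ∈ π, 1 < ∑ B ∈ π, (π'.filter (· ⊆ B)).card :=
    Finset.sum_lt_sum hone ⟨B, hB, htwo⟩
  simpa [hcard] using this

end PartitionBasics

end LB13
namespace LB13

open Finset

section Existence

variable {S A : Type}

open scoped Classical in
/-- The cell of `s` inside block `B`: members of `B` with the same signature as `s`. -/
noncomputable def cell (L : LTS S A) (π : Finset (Finset S)) (B : Finset S) (s : S) :
    Finset S :=
  B.filter (fun t => ∀ a : A, ∀ C ∈ π, (ReachesSet L t a C ↔ ReachesSet L s a C))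

open scoped Classical in
noncomputable def refineStep (L : LTS S A) (π : Finset (Finset S)) :
    Finset (Finset S) :=
  π.biUnion (fun B => B.image (fun s => cell L π B s))

variable {L : LTS S A} {π : Finset (Finset S)}

lemma mem_cell_iff {B : Finset S} {s t : S} :
    t ∈ cell L π B s ↔ t ∈ B ∧ ∀ a : A, ∀ C ∈ π,
      (ReachesSet L t a C ↔ ReachesSet L s a C) := by
  classical
  simp [cell]

lemma self_mem_cell {B : Finset S} {s : S} (hs : s ∈ B) : s ∈ cell L π B s :=
  mem_cell_iff.2 ⟨hs, fun _ _ _ => Iff.rfl⟩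

lemma cell_subset {B : Finset S} {s : S} : cell L π B s ⊆ B := by
  intro t ht; exact (mem_cell_iff.1 ht).1

lemma cell_eq_of_mem {B : Finset S} {s t : S} (ht : t ∈ cell L π B s) :
    cell L π B t = cell L π B s := by
  obtain ⟨-, hsig⟩ := mem_cell_iff.1 ht
  ext u
  simp only [mem_cell_iff]
  constructor
  · rintro ⟨hu, h⟩
    exact ⟨hu, fun a C hC => (h a C hC).trans (hsig a C hC)⟩
  · rintro ⟨hu, h⟩
    exact ⟨hu, fun a C hC => (h a C hC).trans (hsig a C hC).symm⟩

lemma mem_refineStep_iff {B' : Finset S} :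
    B' ∈ refineStep L π ↔ ∃ B ∈ π, ∃ s ∈ B, B' = cell L π B s := by
  classical
  simp only [refineStep, Finset.mem_biUnion, Finset.mem_image]
  constructor
  · rintro ⟨B, hB, s, hs, rfl⟩; exact ⟨B, hB, s, hs, rfl⟩
  · rintro ⟨B, hB, s, hs, rfl⟩; exact ⟨B, hB, s, hs, rfl⟩

lemma refineStep_partition (hπ : IsBlockPartition π) :
    IsBlockPartition (refineStep L π) := by
  refine ⟨?_, ?_, ?_⟩
  · intro hmem
    obtain ⟨B, hB, s, hs, hcell⟩ := mem_refineStep_iff.1 hmem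
    exact absurd (hcell ▸ self_mem_cell hs) (Finset.notMem_empty s)
  · intro B' hB' C' hC' hne
    obtain ⟨B, hB, s, hs, rfl⟩ := mem_refineStep_iff.1 hB'
    obtain ⟨C, hC, t, ht, rfl⟩ := mem_refineStep_iff.1 hC'
    rw [Finset.disjoint_left]
    intro x hx1 hx2
    have hBC : B = C := block_eq hπ hB hC (cell_subset hx1) (cell_subset hx2)
    subst hBC
    exact hne ((cell_eq_of_mem hx1).symm.trans (cell_eq_of_mem hx2))
  · intro s
    obtain ⟨B, hB, hs⟩ := hπ.2.2 s
    exact ⟨cell L π B s, (mem_refineStep_iff (π := π)).2 ⟨B, hB, s, hs, rfl⟩, self_mem_cell hs⟩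

lemma refineStep_refines : RefinesPart (refineStep L π) π := by
  intro B' hB'
  obtain ⟨B, hB, s, hs, rfl⟩ := mem_refineStep_iff.1 hB'
  exact ⟨B, hB, cell_subset⟩

lemma stable_of_refineStep_eq (hπ : IsBlockPartition π)
    (h : refineStep L π = π) : IsStablePartition L π := by
  -- every block is signature-uniform
  have huniform : ∀ B ∈ π, ∀ s ∈ B, ∀ t ∈ B, ∀ a : A, ∀ C ∈ π,
      (ReachesSet L t a C ↔ ReachesSet L s a C) := by
    intro B hB s hs t ht a C hC
    have hcell : cell L π B s ∈ refineStep L π :=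
      (mem_refineStep_iff (π := π)).2 ⟨B, hB, s, hs, rfl⟩
    rw [h] at hcell
    have : cell L π B s = B := block_eq hπ hcell hB (self_mem_cell hs) hs
    exact (mem_cell_iff.1 (this ▸ ht)).2 a C hC
  intro B hB C hC a
  by_cases hex : ∃ s ∈ B, ReachesSet L s a C
  · obtain ⟨s, hs, hreach⟩ := hex
    exact Or.inl (fun t ht => (huniform B hB s hs t ht a C hC).2 hreach)
  · push_neg at hex
    exact Or.inr hex

lemma refineStep_ne_of_not_stable (hπ : IsBlockPartition π)
    (h : ¬ IsStablePartition L π) : refineStep L π ≠ π :=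
  fun he => h (stable_of_refineStep_eq hπ he)

lemma refineStep_valid (hπ : IsBlockPartition π)
    (h : ¬ IsStablePartition L π) : ValidRefinement L π (refineStep L π) := by
  refine ⟨refineStep_refines, refineStep_ne_of_not_stable hπ h, ?_⟩
  intro s t hnot
  by_cases hsame : inSameBlock π s t
  · right
    obtain ⟨B, hB, hs, ht⟩ := hsame
    have htcell : t ∉ cell L π B s := by
      intro hmem
      exact hnot ⟨cell L π B s, (mem_refineStep_iff (π := π)).2 ⟨B, hB, s, hs, rfl⟩,
        self_mem_cell hs, hmem⟩
    have : ¬ ∀ a : A, ∀ C ∈ π, (ReachesSet L t a C ↔ ReachesSet L s a C) := by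
      intro hall
      exact htcell (mem_cell_iff.2 ⟨ht, hall⟩)
    push_neg at this
    obtain ⟨a, C, hC, hne⟩ := this
    -- one of s, t reaches C via a, the other does not
    have key : ∀ u v : S, ReachesSet L u a C → ¬ ReachesSet L v a C →
        SplitWitness L π u v := by
      intro u v ⟨u', hu'C, htr⟩ hvnot
      refine ⟨a, u', htr, ?_⟩
      intro v' hv' hsame'
      obtain ⟨D, hD, hu'D, hv'D⟩ := hsame'
      have : D = C := block_eq hπ hD hC hu'D hu'C
      exact hvnot ⟨v', this ▸ hv'D, hv'⟩
    rcases hne with ⟨ht', hs'⟩ | ⟨ht', hs'⟩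
    · exact Or.inr (key t s ht' hs')
    · exact Or.inl (key s t hs' ht')
  · exact Or.inl hsame

theorem exists_valid_seq [Fintype S] (L : LTS S A)
    (h0 : IsBlockPartition L.init) : ∃ n seq, ValidRefinementSeq L n seq := by
  classical
  set g : ℕ → Finset (Finset S) := fun i =>
    Nat.rec L.init (fun _ π => if IsStablePartition L π then π else refineStep L π) i
    with hg
  have hgsucc : ∀ i, g (i + 1) =
      if IsStablePartition L (g i) then g i else refineStep L (g i) := fun i => rfl
  have hpart : ∀ i, IsBlockPartition (g i) := by
    intro i
    induction i with
    | zero => exact h0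
    | succ i ih =>
      rw [hgsucc]
      split
      · exact ih
      · exact refineStep_partition ih
  have hgrow : ∀ i, IsStablePartition L (g i) ∨ i + (g 0).card ≤ (g i).card := by
    intro i
    induction i with
    | zero => exact Or.inr (by omega)
    | succ i ih =>
      by_cases hst : IsStablePartition L (g i)
      · left
        rw [hgsucc, if_pos hst]
        exact hst
      · rcases ih with h | h
        · exact absurd h hst
        · right
          rw [hgsucc, if_neg hst]
          have := card_lt_of_strict_refines (hpart i) (refineStep_partition (hpart i))
            refineStep_refines (refineStep_ne_of_not_stable (hpart i) hst)
          omega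
  have hexists : ∃ i, IsStablePartition L (g i) := by
    rcases hgrow (Fintype.card S + 1) with h | h
    · exact ⟨Fintype.card S + 1, h⟩
    · have := card_partition_le (hpart (Fintype.card S + 1))
      omega
  set n := Nat.find hexists with hn
  refine ⟨n, g, rfl, fun i _ => hpart i, ?_, Nat.find_spec hexists⟩
  intro i hi
  have hst : ¬ IsStablePartition L (g i) := Nat.find_min hexists hi
  rw [hgsucc, if_neg hst]
  exact refineStep_valid (hpart i) hst

end Existence

end LB13
namespace LB13

open Finset

section LayeredBasics

variable {k : ℕ}

/-- The (deterministic) successor function of the layered bisplitter. -/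
def cnext (k : ℕ) (s : CState k) (α : Bool) : CState k :=
  match s with
  | Sum.inl (σ, ℓ) =>
      if h : ℓ.val + 1 < 2 ^ k then Sum.inl (σ, ⟨ℓ.val + 1, h⟩)
      else Sum.inr (σ, rootWord k)
  | Sum.inr (σ, w) =>
      if h : w.1.val < treeHeight k then
        Sum.inr (σ, ⟨⟨w.1.val + 1, by omega⟩, Fin.snoc w.2 α⟩)
      else Sum.inl (bkSucc k σ (List.ofFn w.2 ++ [α]), ⟨0, by positivity⟩)

lemma cTr_iff {s t : CState k} {α : Bool} : cTr k s α t ↔ t = cnext k s α := by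
  rcases s with ⟨σ, ℓ⟩ | ⟨σ, w⟩ <;> simp only [cTr, cnext] <;> split <;> rfl

lemma cTr_cnext (s : CState k) (α : Bool) : cTr k s α (cnext k s α) :=
  cTr_iff.2 rfl

lemma cTr_det {s t t' : CState k} {α : Bool} (h : cTr k s α t) (h' : cTr k s α t') :
    t = t' := by
  rw [cTr_iff] at h h'; rw [h, h']

lemma mem_stakeBlock {x : CState k} {ℓ : Fin (2 ^ k)} {b : Bool} :
    x ∈ stakeBlock k ℓ b ↔ ∃ σ, firstBit σ = b ∧ x = Sum.inl (σ, ℓ) := by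
  simp [stakeBlock]

lemma inl_mem_stakeBlock {σ : Fin k → Bool} {ℓ ℓ' : Fin (2 ^ k)} {b : Bool} :
    (Sum.inl (σ, ℓ) : CState k) ∈ stakeBlock k ℓ' b ↔ ℓ = ℓ' ∧ firstBit σ = b := by
  rw [mem_stakeBlock]
  constructor
  · rintro ⟨τ, hb, heq⟩
    obtain ⟨h1, h2⟩ := Prod.mk.injEq .. ▸ (Sum.inl.injEq .. ▸ heq)
    exact ⟨h2, h1 ▸ hb⟩
  · rintro ⟨rfl, hb⟩
    exact ⟨σ, hb, rfl⟩

lemma mem_treeBlock {x : CState k} :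
    x ∈ treeBlock k ↔ ∃ p, x = Sum.inr p := by
  simp [treeBlock, Sum.isRight_iff]

lemma mem_cInit_iff {B : Finset (CState k)} :
    B ∈ cInit k ↔ (∃ ℓ b, B = stakeBlock k ℓ b) ∨ B = treeBlock k := by
  simp only [cInit, Finset.mem_union, Finset.mem_image, Finset.mem_univ, true_and,
    Finset.mem_singleton]
  constructor
  · rintro (⟨⟨ℓ, b⟩, heq⟩ | h)
    · exact Or.inl ⟨ℓ, b, heq.symm⟩
    · exact Or.inr h
  · rintro (⟨ℓ, b, rfl⟩ | rfl)
    · exact Or.inl ⟨⟨ℓ, b⟩, rfl⟩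
    · exact Or.inr rfl

lemma firstBit_const (hk : 0 < k) (b : Bool) : firstBit (fun _ : Fin k => b) = b := by
  simp [firstBit, hk]

lemma cInit_partition (hk : 0 < k) : IsBlockPartition (cInit k) := by
  refine ⟨?_, ?_, ?_⟩
  · intro hmem
    rcases mem_cInit_iff.1 hmem with ⟨ℓ, b, h⟩ | h
    · have : (Sum.inl (fun _ => b, ℓ) : CState k) ∈ (∅ : Finset (CState k)) :=
        h ▸ inl_mem_stakeBlock.2 ⟨rfl, firstBit_const hk b⟩
      simp at this
    · have : (Sum.inr ((fun _ => false), rootWord k) : CState k) ∈ (∅ : Finset (CState k)) :=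
        h ▸ mem_treeBlock.2 ⟨_, rfl⟩
      simp at this
  · intro B hB C hC hne
    rw [Finset.disjoint_left]
    intro x hxB hxC
    apply hne
    rcases mem_cInit_iff.1 hB with ⟨ℓ, b, rfl⟩ | rfl <;>
      rcases mem_cInit_iff.1 hC with ⟨ℓ', b', rfl⟩ | rfl
    · obtain ⟨σ, hb, rfl⟩ := mem_stakeBlock.1 hxB
      obtain ⟨hl, hb'⟩ := inl_mem_stakeBlock.1 hxC
      subst hl; rw [← hb, ← hb']
    · obtain ⟨σ, hb, rfl⟩ := mem_stakeBlock.1 hxB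
      obtain ⟨p, hp⟩ := mem_treeBlock.1 hxC
      simp at hp
    · obtain ⟨σ, hb, rfl⟩ := mem_stakeBlock.1 hxC
      obtain ⟨p, hp⟩ := mem_treeBlock.1 hxB
      simp at hp
    · rfl
  · intro s
    rcases s with ⟨σ, ℓ⟩ | ⟨σ, w⟩
    · exact ⟨stakeBlock k ℓ (firstBit σ), mem_cInit_iff.2 (Or.inl ⟨ℓ, _, rfl⟩),
        inl_mem_stakeBlock.2 ⟨rfl, rfl⟩⟩
    · exact ⟨treeBlock k, mem_cInit_iff.2 (Or.inr rfl), mem_treeBlock.2 ⟨_, rfl⟩⟩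

lemma init_same_stake {σ τ : Fin k → Bool} {ℓ ℓ' : Fin (2 ^ k)}
    (h : inSameBlock (cInit k) (Sum.inl (σ, ℓ)) (Sum.inl (τ, ℓ'))) :
    ℓ = ℓ' ∧ firstBit σ = firstBit τ := by
  obtain ⟨B, hB, h1, h2⟩ := h
  rcases mem_cInit_iff.1 hB with ⟨ℓ'', b, rfl⟩ | rfl
  · obtain ⟨e1, e2⟩ := inl_mem_stakeBlock.1 h1
    obtain ⟨e3, e4⟩ := inl_mem_stakeBlock.1 h2
    exact ⟨e1.trans e3.symm, e2.trans e4.symm⟩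
  · obtain ⟨p, hp⟩ := mem_treeBlock.1 h1
    simp at hp

lemma init_same_of_firstBit {σ τ : Fin k → Bool} {ℓ : Fin (2 ^ k)}
    (h : firstBit σ = firstBit τ) :
    inSameBlock (cInit k) (Sum.inl (σ, ℓ)) (Sum.inl (τ, ℓ)) :=
  ⟨stakeBlock k ℓ (firstBit σ), mem_cInit_iff.2 (Or.inl ⟨ℓ, _, rfl⟩),
    inl_mem_stakeBlock.2 ⟨rfl, rfl⟩, inl_mem_stakeBlock.2 ⟨rfl, h.symm⟩⟩

lemma init_same_tree {σ τ : Fin k → Bool} {w w' : TreeWord (treeHeight k)} :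
    inSameBlock (cInit k) (Sum.inr (σ, w)) (Sum.inr (τ, w')) :=
  ⟨treeBlock k, mem_cInit_iff.2 (Or.inr rfl), mem_treeBlock.2 ⟨_, rfl⟩,
    mem_treeBlock.2 ⟨_, rfl⟩⟩

end LayeredBasics

end LB13
namespace LB13

open Finset

section BsplitterBasics

variable {k : ℕ}

/-- The B_k action index encoded by a full tree word. -/
def jOf (hk : 1 < k) (v : List Bool) : Fin (k - 1) :=
  ⟨min (binVal v) (k - 2), by omega⟩

lemma bkSucc_eq_bsStep (hk : 1 < k) (σ : Fin k → Bool) (v : List Bool) :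
    bkSucc k σ v = bsStep σ (jOf hk v) := by
  have hc : min (binVal v) (k - 2) < k - 1 := by omega
  rw [bkSucc, dif_pos hc]
  rfl

lemma binVal_append (l : List Bool) (α : Bool) :
    binVal (l ++ [α]) = 2 * binVal l + α.toNat := by
  simp [binVal, List.foldl_append]

lemma exists_ofFn_binVal : ∀ (h N : ℕ), N < 2 ^ h →
    ∃ g : Fin h → Bool, binVal (List.ofFn g) = N := by
  intro h
  induction h with
  | zero =>
    intro N hN
    interval_cases N
    exact ⟨fun i => i.elim0, rfl⟩
  | succ h ih =>
    intro N hN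
    have hdiv : N / 2 < 2 ^ h := by
      have : 2 ^ (h + 1) = 2 * 2 ^ h := by ring
      omega
    obtain ⟨g', hg'⟩ := ih (N / 2) hdiv
    refine ⟨Fin.snoc g' (decide (N % 2 = 1)), ?_⟩
    have hofn : List.ofFn (Fin.snoc g' (decide (N % 2 = 1)) : Fin (h+1) → Bool) =
        List.ofFn g' ++ [decide (N % 2 = 1)] := by
      rw [List.ofFn_succ', List.concat_eq_append]
      congr 1
      · congr 1
        funext i
        exact Fin.snoc_castSucc _ _ i
      · rw [Fin.snoc_last]
    rw [hofn, binVal_append, hg']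
    rcases Nat.mod_two_eq_zero_or_one N with h2 | h2 <;> rw [h2] <;> simp <;> omega

lemma pow_treeHeight_ge (hk : 1 < k) : k - 1 ≤ 2 ^ (treeHeight k + 1) := by
  have h1 : k / 2 ≤ 2 ^ treeHeight k := Nat.le_pow_clog (by norm_num) _
  have h2 : 2 ^ (treeHeight k + 1) = 2 * 2 ^ treeHeight k := by ring
  omega

lemma exists_word_for_action (hk : 1 < k) (j : Fin (k - 1)) :
    ∃ (g : Fin (treeHeight k) → Bool) (α : Bool),
      jOf hk (List.ofFn g ++ [α]) = j := by
  have hj : (j : ℕ) < k - 1 := j.isLt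
  have hN : (j : ℕ) < 2 ^ (treeHeight k + 1) := by
    have := pow_treeHeight_ge hk; omega
  obtain ⟨gfull, hgfull⟩ := exists_ofFn_binVal (treeHeight k + 1) j hN
  refine ⟨Fin.init gfull, gfull (Fin.last _), ?_⟩
  have hofn : List.ofFn gfull = List.ofFn (Fin.init gfull) ++ [gfull (Fin.last _)] := by
    rw [List.ofFn_succ', List.concat_eq_append]
    rfl
  rw [← hofn]
  apply Fin.ext
  simp only [jOf, hgfull]
  omega

lemma mem_prefixBlock_singleton (hk : 0 < k) {σ : Fin k → Bool} {b : Bool} :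
    σ ∈ prefixBlock k [b] ↔ firstBit σ = b := by
  have hlen : 0 < (List.ofFn σ).length := by simpa using hk
  have hne : List.ofFn σ ≠ [] := List.ne_nil_of_length_pos hlen
  have hh : (List.ofFn σ).head hne = σ ⟨0, hk⟩ := by
    rw [← List.getElem_ofFn (f := σ) (i := 0) hlen]
    exact (List.getElem_zero hlen).symm
  have hfb : firstBit σ = σ ⟨0, hk⟩ := by rw [firstBit, dif_pos hk]
  simp only [prefixBlock, Finset.mem_filter, Finset.mem_univ, true_and]
  constructor
  · rintro ⟨t, ht⟩
    have h0 : List.ofFn σ = b :: t := ht.symm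
    rw [hfb, ← hh]
    simp [h0]
  · intro hb
    refine ⟨(List.ofFn σ).tail, ?_⟩
    show b :: (List.ofFn σ).tail = List.ofFn σ
    conv_rhs => rw [← List.cons_head_tail (l := List.ofFn σ) hne]
    rw [hh, hfb.symm.trans hb]

lemma bisplitter_init_eq (hk : 0 < k) :
    (bisplitter k).init =
      {Finset.univ.filter (fun σ : Fin k → Bool => firstBit σ = false),
       Finset.univ.filter (fun σ : Fin k → Bool => firstBit σ = true)} := by
  show ({prefixBlock k [false], prefixBlock k [true]} : Finset _) = _
  congr 1 <;> [skip; congr 1] <;>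
  · ext σ
    simp only [Finset.mem_filter, Finset.mem_univ, true_and]
    exact mem_prefixBlock_singleton hk

end BsplitterBasics

end LB13
namespace LB13

open Finset

section Projection

variable {k : ℕ}

/-- Forgets everything but the B_k state. -/
def projC : CState k → (Fin k → Bool) :=
  fun s => match s with
  | Sum.inl (σ, _) => σ
  | Sum.inr (σ, _) => σ

/-- The set of stake states at level `ℓ`. -/
def levset (k : ℕ) (ℓ : Fin (2 ^ k)) : Finset (CState k) :=
  Finset.univ.filter (fun s => ∃ σ, s = Sum.inl (σ, ℓ))

/-- The projection of a partition of `C_k` to level `ℓ`. -/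
def rho (ℓ : Fin (2 ^ k)) (π : Finset (Finset (CState k))) :
    Finset (Finset (Fin k → Bool)) :=
  (π.filter (fun B => B ⊆ levset k ℓ)).image (Finset.image projC)

lemma mem_levset {x : CState k} {ℓ : Fin (2 ^ k)} :
    x ∈ levset k ℓ ↔ ∃ σ, x = Sum.inl (σ, ℓ) := by
  simp [levset]

lemma projC_injOn_levset {ℓ : Fin (2 ^ k)} {x y : CState k}
    (hx : x ∈ levset k ℓ) (hy : y ∈ levset k ℓ) (h : projC x = projC y) : x = y := by
  obtain ⟨σ, rfl⟩ := mem_levset.1 hx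
  obtain ⟨τ, rfl⟩ := mem_levset.1 hy
  simp only [projC] at h
  rw [h]

lemma mem_image_projC {B : Finset (CState k)} {ℓ : Fin (2 ^ k)}
    (hB : B ⊆ levset k ℓ) {σ : Fin k → Bool} :
    σ ∈ B.image projC ↔ (Sum.inl (σ, ℓ) : CState k) ∈ B := by
  constructor
  · intro h
    obtain ⟨x, hx, hproj⟩ := Finset.mem_image.1 h
    obtain ⟨τ, rfl⟩ := mem_levset.1 (hB hx)
    simp only [projC] at hproj
    rwa [hproj] at hx
  · intro h
    exact Finset.mem_image.2 ⟨_, h, rfl⟩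

lemma card_image_projC {B : Finset (CState k)} {ℓ : Fin (2 ^ k)}
    (hB : B ⊆ levset k ℓ) : (B.image projC).card = B.card :=
  Finset.card_image_of_injOn (fun x hx y hy => projC_injOn_levset (hB hx) (hB hy))

lemma image_projC_subset_iff {B C : Finset (CState k)} {ℓ : Fin (2 ^ k)}
    (hB : B ⊆ levset k ℓ) (hC : C ⊆ levset k ℓ) :
    B.image projC ⊆ C.image projC ↔ B ⊆ C := by
  constructor
  · intro h x hx
    obtain ⟨σ, rfl⟩ := mem_levset.1 (hB hx)
    exact (mem_image_projC hC).1 (h ((mem_image_projC hB).2 hx))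
  · intro h
    exact Finset.image_subset_image h

lemma image_projC_inj {B C : Finset (CState k)} {ℓ : Fin (2 ^ k)}
    (hB : B ⊆ levset k ℓ) (hC : C ⊆ levset k ℓ)
    (h : B.image projC = C.image projC) : B = C :=
  Finset.Subset.antisymm
    ((image_projC_subset_iff hB hC).1 h.le)
    ((image_projC_subset_iff hC hB).1 h.ge)

lemma block_subset_levset {π : Finset (Finset (CState k))}
    (href : RefinesPart π (cInit k)) {B : Finset (CState k)} (hB : B ∈ π)
    {σ : Fin k → Bool} {ℓ : Fin (2 ^ k)} (hx : Sum.inl (σ, ℓ) ∈ B) :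
    B ⊆ levset k ℓ := by
  obtain ⟨B₀, hB₀, hsub⟩ := href B hB
  rcases mem_cInit_iff.1 hB₀ with ⟨ℓ', b, rfl⟩ | rfl
  · obtain ⟨rfl, -⟩ := inl_mem_stakeBlock.1 (hsub hx)
    intro y hy
    obtain ⟨τ, -, rfl⟩ := mem_stakeBlock.1 (hsub hy)
    exact mem_levset.2 ⟨τ, rfl⟩
  · obtain ⟨p, hp⟩ := mem_treeBlock.1 (hsub hx)
    simp at hp

lemma mem_rho_iff {ℓ : Fin (2 ^ k)} {π : Finset (Finset (CState k))}
    {D : Finset (Fin k → Bool)} :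
    D ∈ rho ℓ π ↔ ∃ B ∈ π, B ⊆ levset k ℓ ∧ D = B.image projC := by
  simp only [rho, Finset.mem_image, Finset.mem_filter]
  constructor
  · rintro ⟨B, ⟨hB, hsub⟩, rfl⟩; exact ⟨B, hB, hsub, rfl⟩
  · rintro ⟨B, hB, hsub, rfl⟩; exact ⟨B, ⟨hB, hsub⟩, rfl⟩

lemma rho_partition {ℓ : Fin (2 ^ k)} {π : Finset (Finset (CState k))}
    (hπ : IsBlockPartition π) (href : RefinesPart π (cInit k)) :
    IsBlockPartition (rho ℓ π) := by
  refine ⟨?_, ?_, ?_⟩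
  · intro hmem
    obtain ⟨B, hB, hsub, himg⟩ := mem_rho_iff.1 hmem
    obtain ⟨x, hx⟩ := nonempty_of_mem hπ hB
    have : projC x ∈ B.image projC := Finset.mem_image.2 ⟨x, hx, rfl⟩
    rw [← himg] at this
    simp at this
  · intro D hD E hE hne
    obtain ⟨B, hB, hBsub, rfl⟩ := mem_rho_iff.1 hD
    obtain ⟨C, hC, hCsub, rfl⟩ := mem_rho_iff.1 hE
    rw [Finset.disjoint_left]
    intro σ h1 h2
    have hx1 := (mem_image_projC hBsub).1 h1
    have hx2 := (mem_image_projC hCsub).1 h2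
    exact hne (congrArg (Finset.image projC) (block_eq hπ hB hC hx1 hx2))
  · intro σ
    obtain ⟨B, hB, hx⟩ := hπ.2.2 (Sum.inl (σ, ℓ))
    have hsub := block_subset_levset href hB hx
    exact ⟨B.image projC, mem_rho_iff.2 ⟨B, hB, hsub, rfl⟩, (mem_image_projC hsub).2 hx⟩

lemma rho_refines {ℓ : Fin (2 ^ k)} {π π' : Finset (Finset (CState k))}
    (hπ' : IsBlockPartition π') (href : RefinesPart π' π)
    (hrefinit : RefinesPart π (cInit k)) :
    RefinesPart (rho ℓ π') (rho ℓ π) := by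
  intro D hD
  obtain ⟨C, hC, hCsub, rfl⟩ := mem_rho_iff.1 hD
  obtain ⟨B, hB, hsub⟩ := href C hC
  obtain ⟨x, hx⟩ := nonempty_of_mem hπ' hC
  obtain ⟨σ, rfl⟩ := mem_levset.1 (hCsub hx)
  have hBsub : B ⊆ levset k ℓ := block_subset_levset hrefinit hB (hsub hx)
  exact ⟨B.image projC, mem_rho_iff.2 ⟨B, hB, hBsub, rfl⟩, Finset.image_subset_image hsub⟩

lemma inSameBlock_rho_iff {ℓ : Fin (2 ^ k)} {π : Finset (Finset (CState k))}
    (hπ : IsBlockPartition π) (hrefinit : RefinesPart π (cInit k))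
    {σ τ : Fin k → Bool} :
    inSameBlock (rho ℓ π) σ τ ↔
      inSameBlock π (Sum.inl (σ, ℓ)) (Sum.inl (τ, ℓ)) := by
  constructor
  · rintro ⟨D, hD, h1, h2⟩
    obtain ⟨B, hB, hBsub, rfl⟩ := mem_rho_iff.1 hD
    exact ⟨B, hB, (mem_image_projC hBsub).1 h1, (mem_image_projC hBsub).1 h2⟩
  · rintro ⟨B, hB, h1, h2⟩
    have hBsub := block_subset_levset hrefinit hB h1
    exact ⟨B.image projC, mem_rho_iff.2 ⟨B, hB, hBsub, rfl⟩,
      (mem_image_projC hBsub).2 h1, (mem_image_projC hBsub).2 h2⟩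

lemma image_projC_stakeBlock {ℓ : Fin (2 ^ k)} (b : Bool) :
    (stakeBlock k ℓ b).image projC =
      Finset.univ.filter (fun σ : Fin k → Bool => firstBit σ = b) := by
  ext σ
  have hsub : stakeBlock k ℓ b ⊆ levset k ℓ := by
    intro y hy
    obtain ⟨τ, -, rfl⟩ := mem_stakeBlock.1 hy
    exact mem_levset.2 ⟨τ, rfl⟩
  rw [mem_image_projC hsub, inl_mem_stakeBlock]
  simp

lemma rho_cInit (hk : 0 < k) (ℓ : Fin (2 ^ k)) :
    rho ℓ (cInit k) = (bisplitter k).init := by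
  rw [bisplitter_init_eq hk]
  ext D
  rw [mem_rho_iff]
  constructor
  · rintro ⟨B, hB, hsub, rfl⟩
    rcases mem_cInit_iff.1 hB with ⟨ℓ', b, rfl⟩ | rfl
    · have hℓ : ℓ' = ℓ := by
        have hx : (Sum.inl ((fun _ => b), ℓ') : CState k) ∈ stakeBlock k ℓ' b :=
          inl_mem_stakeBlock.2 ⟨rfl, firstBit_const hk b⟩
        obtain ⟨τ, h⟩ := mem_levset.1 (hsub hx)
        exact congrArg Prod.snd (Sum.inl.inj h)
      subst hℓ
      rw [image_projC_stakeBlock]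
      cases b
      · exact Finset.mem_insert.2 (Or.inl rfl)
      · exact Finset.mem_insert.2 (Or.inr (Finset.mem_singleton.2 rfl))
    · have hx : (Sum.inr ((fun _ => false), rootWord k) : CState k) ∈ treeBlock k :=
        mem_treeBlock.2 ⟨_, rfl⟩
      obtain ⟨τ, h⟩ := mem_levset.1 (hsub hx)
      simp at h
  · intro hD
    have hstake : ∀ b : Bool,
        D = Finset.univ.filter (fun σ : Fin k → Bool => firstBit σ = b) →
        ∃ B ∈ cInit k, B ⊆ levset k ℓ ∧ D = B.image projC := by
      intro b hDb
      refine ⟨stakeBlock k ℓ b, mem_cInit_iff.2 (Or.inl ⟨ℓ, b, rfl⟩), ?_, ?_⟩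
      · intro y hy
        obtain ⟨τ, -, rfl⟩ := mem_stakeBlock.1 hy
        exact mem_levset.2 ⟨τ, rfl⟩
      · rw [image_projC_stakeBlock, hDb]
    rcases Finset.mem_insert.1 hD with h | h
    · exact hstake false h
    · exact hstake true (Finset.mem_singleton.1 h)

end Projection

end LB13
namespace LB13

open Finset

section Cost

variable {k : ℕ}

/-- The part of a refinement cost incurred at level `ℓ`. -/
def lcost (ℓ : Fin (2 ^ k)) (π π' : Finset (Finset (CState k))) : ℕ :=
  ∑ B ∈ π.filter (· ⊆ levset k ℓ),
    (B.card - ((π'.filter (· ⊆ B)).sup Finset.card))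

lemma IRCstep_rho {ℓ : Fin (2 ^ k)} {π π' : Finset (Finset (CState k))}
    (hπ' : IsBlockPartition π') (hrefinit : RefinesPart π (cInit k)) :
    IRCstep (rho ℓ π) (rho ℓ π') = lcost ℓ π π' := by
  rw [IRCstep, rho, Finset.sum_image]
  · apply Finset.sum_congr rfl
    intro B hB
    rw [Finset.mem_filter] at hB
    obtain ⟨hBπ, hBsub⟩ := hB
    rw [card_image_projC hBsub]
    congr 1
    -- the sup of the sub-blocks agrees
    have himg : (rho ℓ π').filter (· ⊆ B.image projC) =
        (π'.filter (· ⊆ B)).image (Finset.image projC) := by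
      ext D
      simp only [Finset.mem_filter, Finset.mem_image]
      constructor
      · rintro ⟨hD, hsubD⟩
        obtain ⟨C, hC, hCsub, rfl⟩ := mem_rho_iff.1 hD
        exact ⟨C, ⟨hC, (image_projC_subset_iff hCsub hBsub).1 hsubD⟩, rfl⟩
      · rintro ⟨C, ⟨hCπ', hCsub⟩, rfl⟩
        have hClev : C ⊆ levset k ℓ := hCsub.trans hBsub
        exact ⟨mem_rho_iff.2 ⟨C, hCπ', hClev, rfl⟩,
          (image_projC_subset_iff hClev hBsub).2 hCsub⟩
    rw [himg, Finset.sup_image]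
    apply Finset.sup_congr rfl
    intro C hC
    rw [Finset.mem_filter] at hC
    exact card_image_projC (hC.2.trans hBsub)
  · intro B hB C hC h
    exact image_projC_inj (Finset.mem_filter.1 hB).2 (Finset.mem_filter.1 hC).2 h

lemma sum_lcost_le {π π' : Finset (Finset (CState k))}
    (hπ : IsBlockPartition π) :
    ∑ ℓ : Fin (2 ^ k), lcost ℓ π π' ≤ IRCstep π π' := by
  have h1 : ∀ ℓ : Fin (2 ^ k), lcost ℓ π π' =
      ∑ B ∈ π, (if B ⊆ levset k ℓ then
        B.card - ((π'.filter (· ⊆ B)).sup Finset.card) else 0) :=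
    fun ℓ => Finset.sum_filter _ _
  calc ∑ ℓ : Fin (2 ^ k), lcost ℓ π π'
      = ∑ ℓ : Fin (2 ^ k), ∑ B ∈ π, (if B ⊆ levset k ℓ then
          B.card - ((π'.filter (· ⊆ B)).sup Finset.card) else 0) :=
        Finset.sum_congr rfl (fun ℓ _ => h1 ℓ)
    _ = ∑ B ∈ π, ∑ ℓ : Fin (2 ^ k), (if B ⊆ levset k ℓ then
          B.card - ((π'.filter (· ⊆ B)).sup Finset.card) else 0) := Finset.sum_comm
    _ ≤ ∑ B ∈ π, (B.card - ((π'.filter (· ⊆ B)).sup Finset.card)) := ?_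
    _ = IRCstep π π' := rfl
  apply Finset.sum_le_sum
  intro B hB
  by_cases hex : ∃ ℓ0 : Fin (2 ^ k), B ⊆ levset k ℓ0
  · obtain ⟨ℓ0, h0⟩ := hex
    rw [Finset.sum_eq_single_of_mem ℓ0 (Finset.mem_univ _)]
    · rw [if_pos h0]
    · intro b _ hb
      rw [if_neg]
      intro hsub
      apply hb
      obtain ⟨x, hx⟩ := nonempty_of_mem hπ hB
      obtain ⟨σ, rfl⟩ := mem_levset.1 (hsub hx)
      obtain ⟨τ, he⟩ := mem_levset.1 (h0 hx)
      exact congrArg Prod.snd (Sum.inl.inj he)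
  · push_neg at hex
    have : ∀ ℓ : Fin (2 ^ k), (if B ⊆ levset k ℓ then
        B.card - ((π'.filter (· ⊆ B)).sup Finset.card) else 0) = 0 := by
      intro ℓ
      rw [if_neg]
      intro hsub
      exact absurd hsub (by
        intro h
        exact (by simpa using hex ℓ h : False))
    simp only [this, Finset.sum_const_zero]
    exact Nat.zero_le _

end Cost

end LB13
namespace LB13

open Finset

section Chain

variable {k : ℕ} {n : ℕ} {seq : ℕ → Finset (Finset (CState k))}

/-- Abbreviation: state `σ` at stake level 0. -/
def lv0 (k : ℕ) (σ : Fin k → Bool) : CState k :=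
  Sum.inl (σ, ⟨0, by positivity⟩)

lemma seq_refines (H : ValidRefinementSeq (layered k) n seq) :
    ∀ i j, i ≤ j → j ≤ n → RefinesPart (seq j) (seq i) := by
  intro i j hij hjn
  induction j with
  | zero =>
    have : i = 0 := Nat.le_zero.1 hij
    subst this
    exact refinesPart_refl _
  | succ j ih =>
    rcases Nat.lt_or_ge i (j + 1) with h | h
    · have hstep : RefinesPart (seq (j + 1)) (seq j) :=
        (H.2.2.1 j (by omega)).1
      exact refinesPart_trans hstep (ih (by omega) (by omega))
    · have : i = j + 1 := by omega
      subst this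
      exact refinesPart_refl _

lemma seq_refines_init (H : ValidRefinementSeq (layered k) n seq) {i : ℕ} (hi : i ≤ n) :
    RefinesPart (seq i) (cInit k) := by
  have h0 : seq 0 = cInit k := H.1
  have := seq_refines H 0 i (Nat.zero_le _) hi
  rwa [h0] at this

lemma sep_persist (H : ValidRefinementSeq (layered k) n seq)
    {i j : ℕ} (hij : i ≤ j) (hjn : j ≤ n) {s t : CState k}
    (h : ¬ inSameBlock (seq i) s t) : ¬ inSameBlock (seq j) s t := by
  intro hsame
  exact h (refines_inSameBlock (H.2.1 i (by omega)) (seq_refines H i j hij hjn) hsame)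

lemma exists_first_sep (H : ValidRefinementSeq (layered k) n seq)
    {e : ℕ} (he : e ≤ n) {s t : CState k}
    (h0 : inSameBlock (seq 0) s t) (hsep : ¬ inSameBlock (seq e) s t) :
    ∃ e₁, 0 < e₁ ∧ e₁ ≤ e ∧ inSameBlock (seq (e₁ - 1)) s t ∧
      ¬ inSameBlock (seq e₁) s t := by
  classical
  have hex : ∃ i, ¬ inSameBlock (seq i) s t := ⟨e, hsep⟩
  set e₁ := Nat.find hex with he₁
  have hspec : ¬ inSameBlock (seq e₁) s t := Nat.find_spec hex
  have hle : e₁ ≤ e := Nat.find_le hsep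
  have hpos : 0 < e₁ := by
    rcases Nat.eq_zero_or_pos e₁ with h | h
    · rw [h] at hspec
      exact absurd h0 hspec
    · exact h
  have hprev : inSameBlock (seq (e₁ - 1)) s t := by
    by_contra hcon
    have h2 : e₁ ≤ e₁ - 1 := he₁ ▸ Nat.find_le hcon
    omega
  exact ⟨e₁, hpos, hle, hprev, hspec⟩

lemma hop (H : ValidRefinementSeq (layered k) n seq)
    {i : ℕ} (hi : i < n) {s t : CState k}
    (hsame : inSameBlock (seq i) s t) (hsep : ¬ inSameBlock (seq (i + 1)) s t) :
    ∃ α : Bool, ¬ inSameBlock (seq i) (cnext k s α) (cnext k t α) := by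
  rcases (H.2.2.1 i hi).2.2 s t hsep with h | h | h
  · exact absurd hsame h
  · obtain ⟨α, s', htr, hall⟩ := h
    have hs' : s' = cnext k s α := cTr_iff.1 htr
    subst hs'
    exact ⟨α, hall (cnext k t α) (cTr_cnext _ _)⟩
  · obtain ⟨α, t', htr, hall⟩ := h
    have ht' : t' = cnext k t α := cTr_iff.1 htr
    subst ht'
    have := hall (cnext k s α) (cTr_cnext _ _)
    exact ⟨α, fun hc => this (inSameBlock_symm hc)⟩

lemma cnext_stake_lt {σ : Fin k → Bool} {ℓ : Fin (2 ^ k)} {α : Bool}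
    (h : (ℓ : ℕ) + 1 < 2 ^ k) :
    cnext k (Sum.inl (σ, ℓ)) α = Sum.inl (σ, ⟨(ℓ : ℕ) + 1, h⟩) := by
  simp only [cnext, dif_pos h]

lemma cnext_stake_top {σ : Fin k → Bool} {ℓ : Fin (2 ^ k)} {α : Bool}
    (h : ¬ ((ℓ : ℕ) + 1 < 2 ^ k)) :
    cnext k (Sum.inl (σ, ℓ)) α = Sum.inr (σ, rootWord k) := by
  simp only [cnext, dif_neg h]

lemma cnext_tree_lt {σ : Fin k → Bool} {w : TreeWord (treeHeight k)} {α : Bool}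
    (h : (w.1 : ℕ) < treeHeight k) :
    cnext k (Sum.inr (σ, w)) α =
      Sum.inr (σ, ⟨⟨(w.1 : ℕ) + 1, by omega⟩, Fin.snoc w.2 α⟩) := by
  simp only [cnext, dif_pos h]

lemma cnext_tree_leaf {σ : Fin k → Bool} {w : TreeWord (treeHeight k)} {α : Bool}
    (h : ¬ ((w.1 : ℕ) < treeHeight k)) :
    cnext k (Sum.inr (σ, w)) α =
      Sum.inl (bkSucc k σ (List.ofFn w.2 ++ [α]), ⟨0, by positivity⟩) := by
  simp only [cnext, dif_neg h]

/-- The descent lemma: a separation of a same-coordinate pair traces back to an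
earlier separation, at level 0, of a pair of `B_k`-successors. -/
lemma down (hk : 1 < k) (H : ValidRefinementSeq (layered k) n seq) :
    ∀ e, e ≤ n → ∀ σ τ : Fin k → Bool,
      (∀ ℓ : Fin (2 ^ k), firstBit σ = firstBit τ →
        ¬ inSameBlock (seq e) (Sum.inl (σ, ℓ)) (Sum.inl (τ, ℓ)) →
        ∃ (j : Fin (k - 1)) (e' : ℕ), e' < e ∧
          ¬ inSameBlock (seq e') (lv0 k (bsStep σ j)) (lv0 k (bsStep τ j))) ∧
      (∀ w : TreeWord (treeHeight k),
        ¬ inSameBlock (seq e) (Sum.inr (σ, w)) (Sum.inr (τ, w)) →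
        ∃ (j : Fin (k - 1)) (e' : ℕ), e' < e ∧
          ¬ inSameBlock (seq e') (lv0 k (bsStep σ j)) (lv0 k (bsStep τ j))) := by
  intro e
  induction e using Nat.strong_induction_on with
  | _ e ih =>
  intro hen σ τ
  constructor
  · intro ℓ hfb hsep
    have h0 : inSameBlock (seq 0) (Sum.inl (σ, ℓ)) (Sum.inl (τ, ℓ)) := by
      rw [H.1]
      exact init_same_of_firstBit hfb
    obtain ⟨e₁, hpos, hle, hprev, hsep₁⟩ := exists_first_sep H hen h0 hsep
    have hstep : e₁ - 1 + 1 = e₁ := by omega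
    have hi : e₁ - 1 < n := by omega
    obtain ⟨α, hα⟩ := hop H hi hprev (by rw [hstep]; exact hsep₁)
    by_cases h2 : (ℓ : ℕ) + 1 < 2 ^ k
    · rw [cnext_stake_lt h2, cnext_stake_lt h2] at hα
      obtain ⟨j, e', he', hsep'⟩ :=
        ((ih (e₁ - 1) (by omega) (by omega) σ τ).1 ⟨(ℓ : ℕ) + 1, h2⟩ hfb hα)
      exact ⟨j, e', by omega, hsep'⟩
    · rw [cnext_stake_top h2, cnext_stake_top h2] at hα
      obtain ⟨j, e', he', hsep'⟩ :=
        ((ih (e₁ - 1) (by omega) (by omega) σ τ).2 (rootWord k) hα)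
      exact ⟨j, e', by omega, hsep'⟩
  · intro w hsep
    have h0 : inSameBlock (seq 0) (Sum.inr (σ, w)) (Sum.inr (τ, w)) := by
      rw [H.1]
      exact init_same_tree
    obtain ⟨e₁, hpos, hle, hprev, hsep₁⟩ := exists_first_sep H hen h0 hsep
    have hstep : e₁ - 1 + 1 = e₁ := by omega
    have hi : e₁ - 1 < n := by omega
    obtain ⟨α, hα⟩ := hop H hi hprev (by rw [hstep]; exact hsep₁)
    by_cases h2 : (w.1 : ℕ) < treeHeight k
    · rw [cnext_tree_lt h2, cnext_tree_lt h2] at hα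
      obtain ⟨j, e', he', hsep'⟩ :=
        ((ih (e₁ - 1) (by omega) (by omega) σ τ).2 _ hα)
      exact ⟨j, e', by omega, hsep'⟩
    · rw [cnext_tree_leaf h2, cnext_tree_leaf h2,
        bkSucc_eq_bsStep hk, bkSucc_eq_bsStep hk] at hα
      exact ⟨jOf hk (List.ofFn w.2 ++ [α]), e₁ - 1, by omega, hα⟩

/-- The climb lemma: a separation at level 0 was preceded by separations of the
same pair at every level. -/
lemma climb (H : ValidRefinementSeq (layered k) n seq) :
    ∀ (r : ℕ) (hr : r < 2 ^ k) (e : ℕ), e ≤ n → ∀ σ τ : Fin k → Bool,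
      ¬ inSameBlock (seq e) (lv0 k σ) (lv0 k τ) →
      ∃ e', e' ≤ e ∧
        ¬ inSameBlock (seq e') (Sum.inl (σ, ⟨r, hr⟩)) (Sum.inl (τ, ⟨r, hr⟩)) := by
  intro r
  induction r with
  | zero => exact fun hr e hen σ τ h => ⟨e, le_rfl, h⟩
  | succ r ih =>
    intro hr1 e hen σ τ hsep
    have hr : r < 2 ^ k := by omega
    obtain ⟨e', he'e, hsep'⟩ := ih hr e hen σ τ hsep
    by_cases hfb : firstBit σ = firstBit τ
    · have h0 : inSameBlock (seq 0) (Sum.inl (σ, ⟨r, hr⟩)) (Sum.inl (τ, ⟨r, hr⟩)) := by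
        rw [H.1]
        exact init_same_of_firstBit hfb
      obtain ⟨e₁, hpos, hle, hprev, hsep₁⟩ := exists_first_sep H (by omega) h0 hsep'
      have hstep : e₁ - 1 + 1 = e₁ := by omega
      obtain ⟨α, hα⟩ := hop H (by omega) hprev (by rw [hstep]; exact hsep₁)
      have h2 : (r : ℕ) + 1 < 2 ^ k := hr1
      rw [cnext_stake_lt (by exact h2), cnext_stake_lt (by exact h2)] at hα
      exact ⟨e₁ - 1, by omega, hα⟩
    · refine ⟨0, Nat.zero_le _, ?_⟩
      rw [H.1]
      intro hsame
      exact hfb (init_same_stake hsame).2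

/-- The key witness lemma: when a pair is freshly separated at some level, the
partition right before the split already separates a pair of `B_k`-successors
at the same level. -/
lemma key_witness (hk : 1 < k) (H : ValidRefinementSeq (layered k) n seq)
    {e : ℕ} (hpos : 0 < e) (hen : e ≤ n) {ℓ : Fin (2 ^ k)} {σ τ : Fin k → Bool}
    (hsame : inSameBlock (seq (e - 1)) (Sum.inl (σ, ℓ)) (Sum.inl (τ, ℓ)))
    (hsep : ¬ inSameBlock (seq e) (Sum.inl (σ, ℓ)) (Sum.inl (τ, ℓ))) :
    ∃ j : Fin (k - 1), ¬ inSameBlock (seq (e - 1))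
      (Sum.inl (bsStep σ j, ℓ)) (Sum.inl (bsStep τ j, ℓ)) := by
  have hinit : inSameBlock (cInit k) (Sum.inl (σ, ℓ)) (Sum.inl (τ, ℓ)) :=
    refines_inSameBlock (cInit_partition (show 0 < k by omega))
      (seq_refines_init H (show e - 1 ≤ n by omega)) hsame
  have hfb : firstBit σ = firstBit τ := (init_same_stake hinit).2
  obtain ⟨j, e', he', hsep'⟩ := (down hk H e hen σ τ).1 ℓ hfb hsep
  obtain ⟨e'', he'', hsep''⟩ := climb H ℓ.val ℓ.isLt e' (by omega) _ _ hsep'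
  refine ⟨j, ?_⟩
  have hfin : (⟨ℓ.val, ℓ.isLt⟩ : Fin (2 ^ k)) = ℓ := rfl
  rw [hfin] at hsep''
  exact sep_persist H (by omega : e'' ≤ e - 1) (by omega) hsep''

end Chain

end LB13
namespace LB13

open Finset

section Stability

variable {k : ℕ} {n : ℕ} {seq : ℕ → Finset (Finset (CState k))}

lemma stable_fwd {π : Finset (Finset (CState k))}
    (hπ : IsBlockPartition π) (hst : IsStablePartition (layered k) π)
    {s t : CState k} (h : inSameBlock π s t) (α : Bool) :
    inSameBlock π (cnext k s α) (cnext k t α) := by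
  obtain ⟨B, hB, hsB, htB⟩ := h
  obtain ⟨C, hC, hsC⟩ := hπ.2.2 (cnext k s α)
  rcases hst B hB C hC α with hall | hnone
  · obtain ⟨t', ht'C, htr⟩ := hall t htB
    have : t' = cnext k t α := cTr_iff.1 htr
    subst this
    exact ⟨C, hC, hsC, ht'C⟩
  · exact absurd ⟨cnext k s α, hsC, cTr_cnext _ _⟩ (hnone s hsB)

/-- `E`-propagation along the stake. -/
lemma final_prop_stake (hπ : IsBlockPartition (seq n))
    (hst : IsStablePartition (layered k) (seq n)) {σ τ : Fin k → Bool} :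
    ∀ (d r : ℕ) (hrd : r + d < 2 ^ k),
      inSameBlock (seq n) (Sum.inl (σ, ⟨r, by omega⟩)) (Sum.inl (τ, ⟨r, by omega⟩)) →
      inSameBlock (seq n) (Sum.inl (σ, ⟨r + d, hrd⟩)) (Sum.inl (τ, ⟨r + d, hrd⟩)) := by
  intro d
  induction d with
  | zero => intro r hrd h; exact h
  | succ d ih =>
    intro r hrd h
    have hrd' : (r + d) + 1 < 2 ^ k := by omega
    have := stable_fwd hπ hst (ih r (by omega) h) false
    rw [cnext_stake_lt (show ((⟨r + d, by omega⟩ : Fin (2 ^ k)) : ℕ) + 1 < 2 ^ k from hrd'),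
      cnext_stake_lt (show ((⟨r + d, by omega⟩ : Fin (2 ^ k)) : ℕ) + 1 < 2 ^ k from hrd')] at this
    exact this

/-- `E`-propagation down the tree. -/
lemma final_prop_tree (hπ : IsBlockPartition (seq n))
    (hst : IsStablePartition (layered k) (seq n)) {σ τ : Fin k → Bool}
    (hroot : inSameBlock (seq n) (Sum.inr (σ, rootWord k)) (Sum.inr (τ, rootWord k))) :
    ∀ (m : ℕ) (hm : m ≤ treeHeight k) (g : Fin m → Bool),
      inSameBlock (seq n) (Sum.inr (σ, ⟨⟨m, by omega⟩, g⟩))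
        (Sum.inr (τ, ⟨⟨m, by omega⟩, g⟩)) := by
  intro m
  induction m with
  | zero =>
    intro hm g
    have hg : (⟨⟨0, by omega⟩, g⟩ : TreeWord (treeHeight k)) = rootWord k := by
      rw [rootWord]
      congr 1
      funext i
      exact i.elim0
    rw [hg]
    exact hroot
  | succ m ih =>
    intro hm g
    have hmh : m < treeHeight k := by omega
    have hE := stable_fwd hπ hst (ih (by omega) (Fin.init g)) (g (Fin.last m))
    rw [cnext_tree_lt (show ((⟨⟨m, by omega⟩, Fin.init g⟩ : TreeWord (treeHeight k)).1 : ℕ)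
        < treeHeight k from hmh),
      cnext_tree_lt (show ((⟨⟨m, by omega⟩, Fin.init g⟩ : TreeWord (treeHeight k)).1 : ℕ)
        < treeHeight k from hmh)] at hE
    simp only [Fin.snoc_init_self] at hE
    exact hE

/-- Around the full loop: blocks of the final stable partition are closed under
`B_k`-successors, at every level. -/
lemma final_loop (hk : 1 < k) (hπ : IsBlockPartition (seq n))
    (hst : IsStablePartition (layered k) (seq n)) {σ τ : Fin k → Bool}
    {ℓ : Fin (2 ^ k)} (h : inSameBlock (seq n) (Sum.inl (σ, ℓ)) (Sum.inl (τ, ℓ)))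
    (j : Fin (k - 1)) :
    inSameBlock (seq n) (Sum.inl (bsStep σ j, ℓ)) (Sum.inl (bsStep τ j, ℓ)) := by
  -- go to the top of the stake
  have hℓ : (ℓ : ℕ) + (2 ^ k - 1 - ℓ) < 2 ^ k := by
    have := ℓ.isLt; omega
  have htop := final_prop_stake hπ hst (2 ^ k - 1 - (ℓ : ℕ)) (ℓ : ℕ) hℓ
    (by exact h)
  -- to the tree root
  have hroot := stable_fwd hπ hst htop false
  have htopval : ((⟨(ℓ : ℕ) + (2 ^ k - 1 - ℓ), hℓ⟩ : Fin (2 ^ k)) : ℕ) + 1 = 2 ^ k := by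
    have := ℓ.isLt
    show (ℓ : ℕ) + (2 ^ k - 1 - ℓ) + 1 = 2 ^ k
    omega
  rw [cnext_stake_top (by omega), cnext_stake_top (by omega)] at hroot
  -- down the tree along the word for action j
  obtain ⟨g, α, hgα⟩ := exists_word_for_action hk j
  have hleaf := final_prop_tree hπ hst hroot (treeHeight k) le_rfl g
  -- exit to level 0
  have hexit := stable_fwd hπ hst hleaf α
  rw [cnext_tree_leaf (by simp), cnext_tree_leaf (by simp)] at hexit
  rw [bkSucc_eq_bsStep hk, bkSucc_eq_bsStep hk] at hexit
  rw [hgα] at hexit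
  -- climb back to level ℓ
  have hclimb := final_prop_stake hπ hst (ℓ : ℕ) 0 (by simpa using ℓ.isLt) hexit
  have : (⟨0 + (ℓ : ℕ), by simpa using ℓ.isLt⟩ : Fin (2 ^ k)) = ℓ := by
    apply Fin.ext
    simp
  rwa [this] at hclimb

/-- The projection of the final stable partition is stable for `B_k`. -/
lemma final_stable (H : ValidRefinementSeq (layered k) n seq) (hk : 1 < k) (ℓ : Fin (2 ^ k)) :
    IsStablePartition (bisplitter k) (rho ℓ (seq n)) := by
  have hπ : IsBlockPartition (seq n) := H.2.1 n le_rfl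
  have hst : IsStablePartition (layered k) (seq n) := H.2.2.2
  intro V hV U hU j
  obtain ⟨B, hB, hBsub, rfl⟩ := mem_rho_iff.1 hV
  obtain ⟨C, hC, hCsub, rfl⟩ := mem_rho_iff.1 hU
  by_cases hex : ∃ σ ∈ B.image projC, bsStep σ j ∈ C.image projC
  · left
    intro τ hτ
    obtain ⟨σ, hσ, hσC⟩ := hex
    have hσB := (mem_image_projC hBsub).1 hσ
    have hτB := (mem_image_projC hBsub).1 hτ
    have hE : inSameBlock (seq n) (Sum.inl (σ, ℓ)) (Sum.inl (τ, ℓ)) := ⟨B, hB, hσB, hτB⟩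
    have hE' := final_loop hk hπ hst hE j
    have hσ'C := (mem_image_projC hCsub).1 hσC
    obtain ⟨D, hD, h1, h2⟩ := hE'
    have hDC : D = C := block_eq hπ hD hC h1 hσ'C
    subst hDC
    exact ⟨bsStep τ j, (mem_image_projC hCsub).2 h2, rfl⟩
  · right
    intro τ hτ ⟨x, hxU, htr⟩
    have hx : x = bsStep τ j := htr
    subst hx
    exact hex ⟨τ, hτ, hxU⟩

end Stability

end LB13
namespace LB13

open Finset

section Assemble

variable {k : ℕ} {n : ℕ} {seq : ℕ → Finset (Finset (CState k))}

lemma build (hk : 1 < k) (H : ValidRefinementSeq (layered k) n seq) (ℓ : Fin (2 ^ k)) :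
    ∀ (b a : ℕ), a ≤ n → n - a ≤ b →
    ∃ (m : ℕ) (sq : ℕ → Finset (Finset (Fin k → Bool))),
      sq 0 = rho ℓ (seq a) ∧
      (∀ i ≤ m, IsBlockPartition (sq i)) ∧
      (∀ i < m, ValidRefinement (bisplitter k) (sq i) (sq (i + 1))) ∧
      sq m = rho ℓ (seq n) ∧
      IRCseq m sq ≤ ∑ s ∈ Finset.Ico a n, lcost ℓ (seq s) (seq (s + 1)) := by
  intro b
  induction b with
  | zero =>
    intro a han hb
    have han' : a = n := by omega
    subst han'
    refine ⟨0, fun _ => rho ℓ (seq a), rfl, ?_, by omega, rfl, by simp [IRCseq]⟩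
    intro i hi
    exact rho_partition (H.2.1 a le_rfl) (seq_refines_init H le_rfl)
  | succ b ihb =>
    intro a han hb
    classical
    by_cases hconst : ∀ s, a ≤ s → s ≤ n → rho ℓ (seq s) = rho ℓ (seq a)
    · refine ⟨0, fun _ => rho ℓ (seq a), rfl, ?_, by omega,
        (hconst n han le_rfl).symm, by simp [IRCseq]⟩
      intro i hi
      exact rho_partition (H.2.1 a han) (seq_refines_init H han)
    · push_neg at hconst
      obtain ⟨s₀, hs₀a, hs₀n, hs₀ne⟩ := hconst
      have hex : ∃ s, a < s ∧ s ≤ n ∧ rho ℓ (seq s) ≠ rho ℓ (seq a) := by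
        refine ⟨s₀, ?_, hs₀n, hs₀ne⟩
        rcases Nat.lt_or_ge a s₀ with h | h
        · exact h
        · exact absurd (by rw [Nat.le_antisymm hs₀a h] : rho ℓ (seq s₀) = rho ℓ (seq a))
            hs₀ne
      set e := Nat.find hex with he_def
      obtain ⟨hae, hen, hne⟩ := Nat.find_spec hex
      have hconst' : ∀ s, a ≤ s → s < e → rho ℓ (seq s) = rho ℓ (seq a) := by
        intro s has hse
        rcases Nat.eq_or_lt_of_le has with h | h
        · rw [← h]
        · by_contra hc
          have := Nat.find_min hex hse
          push_neg at this
          exact hc (this h (by omega))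
      have hprev : rho ℓ (seq (e - 1)) = rho ℓ (seq a) :=
        hconst' (e - 1) (by omega) (by omega)
      have he1n : e - 1 ≤ n := by omega
      have hpart_e1 : IsBlockPartition (seq (e - 1)) := H.2.1 (e - 1) he1n
      have hpart_e : IsBlockPartition (seq e) := H.2.1 e hen
      have hrefinit_e1 : RefinesPart (seq (e - 1)) (cInit k) := seq_refines_init H he1n
      have hstep_e : RefinesPart (seq e) (seq (e - 1)) := by
        have h := (H.2.2.1 (e - 1) (by omega)).1
        have : e - 1 + 1 = e := by omega
        rwa [this] at h
      -- recursive call from e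
      obtain ⟨m', sq', hsq0, hsqpart, hsqstep, hsqend, hsqcost⟩ :=
        ihb e hen (by omega)
      refine ⟨m' + 1, fun i => if i = 0 then rho ℓ (seq a) else sq' (i - 1),
        by simp, ?_, ?_, ?_, ?_⟩
      · intro i hi
        cases i with
        | zero =>
          simp only [if_pos rfl]
          exact rho_partition (H.2.1 a han) (seq_refines_init H han)
        | succ j =>
          simp only [Nat.succ_ne_zero, if_neg, Nat.add_sub_cancel]
          exact hsqpart j (by omega)
      · intro i hi
        cases i with
        | zero =>
          simp only [if_pos rfl, Nat.succ_ne_zero, if_neg, Nat.add_sub_cancel]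
          show ValidRefinement (bisplitter k) (rho ℓ (seq a)) (sq' 0)
          rw [hsq0]
          refine ⟨?_, ?_, ?_⟩
          · rw [← hprev]
            exact rho_refines hpart_e hstep_e hrefinit_e1
          · rw [← hprev]
            intro hcon
            exact hne (hcon.trans hprev)
          · intro σ τ hsepB
            by_cases hsame : inSameBlock (rho ℓ (seq a)) σ τ
            · right; left
              have hsame' : inSameBlock (seq (e - 1)) (Sum.inl (σ, ℓ)) (Sum.inl (τ, ℓ)) :=
                (inSameBlock_rho_iff hpart_e1 hrefinit_e1).1 (hprev ▸ hsame)
              have hsepC : ¬ inSameBlock (seq e) (Sum.inl (σ, ℓ)) (Sum.inl (τ, ℓ)) := by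
                intro hcon
                exact hsepB ((inSameBlock_rho_iff hpart_e (seq_refines_init H hen)).2 hcon)
              obtain ⟨j, hout⟩ := key_witness hk H (by omega) hen hsame' hsepC
              have houtB : ¬ inSameBlock (rho ℓ (seq a)) (bsStep σ j) (bsStep τ j) := by
                rw [← hprev]
                intro hcon
                exact hout ((inSameBlock_rho_iff hpart_e1 hrefinit_e1).1 hcon)
              exact ⟨j, bsStep σ j, rfl, fun t' ht' => by
                rw [show t' = bsStep τ j from ht']; exact houtB⟩
            · exact Or.inl hsame
        | succ j =>
          simp only [Nat.succ_ne_zero, if_neg, Nat.add_sub_cancel]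
          exact hsqstep j (by omega)
      · simp only [Nat.succ_ne_zero, if_neg, Nat.add_sub_cancel]
        exact hsqend
      · -- cost accounting
        have hcost1 : IRCseq (m' + 1) (fun i => if i = 0 then rho ℓ (seq a) else sq' (i - 1))
            = IRCstep (rho ℓ (seq a)) (sq' 0) + IRCseq m' sq' := by
          rw [IRCseq, Finset.sum_range_succ']
          simp only [Nat.succ_ne_zero, if_neg, Nat.add_sub_cancel, if_pos rfl]
          rw [Nat.add_comm]
          rfl
        rw [hcost1, hsq0, ← hprev]
        have hstep_cost : IRCstep (rho ℓ (seq (e - 1))) (rho ℓ (seq e)) =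
            lcost ℓ (seq (e - 1)) (seq e) :=
          IRCstep_rho hpart_e hrefinit_e1
        rw [hstep_cost]
        have hsplit : ∑ s ∈ Finset.Ico a n, lcost ℓ (seq s) (seq (s + 1)) =
            ∑ s ∈ Finset.Ico a e, lcost ℓ (seq s) (seq (s + 1)) +
            ∑ s ∈ Finset.Ico e n, lcost ℓ (seq s) (seq (s + 1)) :=
          (Finset.sum_Ico_consecutive _ (by omega) hen).symm
        rw [hsplit]
        have hmem : e - 1 ∈ Finset.Ico a e := Finset.mem_Ico.2 ⟨by omega, by omega⟩
        have h1 : lcost ℓ (seq (e - 1)) (seq e) ≤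
            ∑ s ∈ Finset.Ico a e, lcost ℓ (seq s) (seq (s + 1)) := by
          have h2 := Finset.single_le_sum (f := fun s => lcost ℓ (seq s) (seq (s + 1)))
            (fun s _ => Nat.zero_le _) hmem
          have he1 : e - 1 + 1 = e := by omega
          rwa [he1] at h2
        omega
  
lemma level_bound (hk : 1 < k)
    (H : ValidRefinementSeq (layered k) n seq) (ℓ : Fin (2 ^ k)) :
    IRC (bisplitter k) ≤ ∑ s ∈ Finset.range n, lcost ℓ (seq s) (seq (s + 1)) := by
  obtain ⟨m, sq, hsq0, hpart, hstep, hend, hcost⟩ := build hk H ℓ n 0 (Nat.zero_le _) le_rfl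
  have hvalid : ValidRefinementSeq (bisplitter k) m sq := by
    refine ⟨?_, hpart, hstep, ?_⟩
    · rw [hsq0, H.1]
      exact rho_cInit (by omega) ℓ
    · rw [hend]
      exact final_stable H hk ℓ
  have hIRC : IRC (bisplitter k) ≤ IRCseq m sq :=
    Nat.sInf_le ⟨m, sq, hvalid, rfl⟩
  calc IRC (bisplitter k) ≤ IRCseq m sq := hIRC
    _ ≤ ∑ s ∈ Finset.Ico 0 n, lcost ℓ (seq s) (seq (s + 1)) := hcost
    _ = ∑ s ∈ Finset.range n, lcost ℓ (seq s) (seq (s + 1)) := by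
        rw [Finset.range_eq_Ico]

end Assemble

end LB13
/-- For k > 1, `IRC(C_k) ≥ 2^k · IRC(B_k)`. -/
theorem layered_bisplitter_cost_dominates
    (k : ℕ) (hk : 1 < k) :
    2 ^ k * IRC (bisplitter k) ≤ IRC (layered k) := by
  have h0k : 0 < k := by omega
  have hinit : IsBlockPartition (layered k).init := LB13.cInit_partition h0k
  obtain ⟨n₀, seq₀, Hs⟩ := LB13.exists_valid_seq (layered k) hinit
  have hne : {c | ∃ n seq, ValidRefinementSeq (layered k) n seq ∧
      IRCseq n seq = c}.Nonempty := ⟨IRCseq n₀ seq₀, n₀, seq₀, Hs, rfl⟩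
  have hmem : ∃ n seq, ValidRefinementSeq (layered k) n seq ∧
      IRCseq n seq = IRC (layered k) := Nat.sInf_mem hne
  obtain ⟨n, seq, H, hc⟩ := hmem
  calc 2 ^ k * IRC (bisplitter k)
      = ∑ _ℓ : Fin (2 ^ k), IRC (bisplitter k) := by
        simp [Finset.sum_const, Finset.card_univ, smul_eq_mul]
    _ ≤ ∑ ℓ : Fin (2 ^ k), ∑ s ∈ Finset.range n, LB13.lcost ℓ (seq s) (seq (s + 1)) :=
        Finset.sum_le_sum (fun ℓ _ => LB13.level_bound hk H ℓ)
    _ = ∑ s ∈ Finset.range n, ∑ ℓ : Fin (2 ^ k), LB13.lcost ℓ (seq s) (seq (s + 1)) :=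
        Finset.sum_comm
    _ ≤ ∑ s ∈ Finset.range n, IRCstep (seq s) (seq (s + 1)) :=
        Finset.sum_le_sum (fun s hs =>
          LB13.sum_lcost_le (H.2.1 s (le_of_lt (Finset.mem_range.1 hs))))
    _ = IRCseq n seq := rfl
    _ = IRC (layered k) := hc
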